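/- Let (G_k)_{k∈ℕ} be a sequence of finite sets of self-mappings on X̄ = X ∪ {∂}, each G_k consisting of forward mappings f→_S (equivalently each is a set of backward mappings). Define Φ_k = {R ∘ g⋆ : g ∈ G_k} as self-mappings on probability measures on X̄. Then for any probability measure b₀ supported in X and any n ∈ ℕ, |⋃_{k=0}^{n} Φ_{0:k}(b₀)| ≤ (1 + |X|)^{|supp(b₀)|}. -/
import Mathlib


open scoped Classical

/-- Forward mapping `f→_S : X̄ → X̄` (`∂` encoded by `none`). -/
noncomputable def forward {X : Type*} (f : X → X) (S : Finset X) :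
    Option X → Option X
  | none => none
  | some x => if f x ∈ S then some (f x) else none

/-- Pushforward of a finitely supported measure on `X̄` by a self-mapping of `X̄`. -/
noncomputable def push {X : Type*} [Fintype X] (g : Option X → Option X)
    (ν : Option X → NNReal) : Option X → NNReal :=
  fun o => ∑ o' ∈ Finset.univ.filter (fun o' => g o' = o), ν o'

/-- Renormalization: the normalized restriction of `ν` to `X` when `ν(X) ≠ 0`,
and the Dirac measure at `∂` otherwise. -/
noncomputable def renorm {X : Type*} [Fintype X] (ν : Option X → NNReal) :
    Option X → NNReal :=
  if (∑ x : X, ν (some x)) = 0 then (fun o => if o = none then 1 else 0)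
  else fun o =>
    match o with
    | none => 0
    | some x => ν (some x) / ∑ x : X, ν (some x)

/-- Cardinality of the support of the restriction to `X` of a measure on `X̄`. -/
noncomputable def suppCard {X : Type*} [Fintype X] (b : Option X → NNReal) : ℕ :=
  (Finset.univ.filter (fun x : X => b (some x) ≠ 0)).card

/-- The set `Φ_{0:k}(b₀) = {φ_k ∘ ⋯ ∘ φ₀ (b₀) : φ_i ∈ Φ_i}`. -/
def iterSet {X : Type*}
    (Φ : ℕ → Set ((Option X → NNReal) → (Option X → NNReal)))
    (b₀ : Option X → NNReal) : ℕ → Set (Option X → NNReal)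
  | 0 => {m | ∃ φ ∈ Φ 0, m = φ b₀}
  | k + 1 => {m | ∃ φ ∈ Φ (k + 1), ∃ m' ∈ iterSet Φ b₀ k, m = φ m'}

lemma renorm_congr {X : Type*} [Fintype X] {μ μ' : Option X → NNReal}
    (h : ∀ x, μ (some x) = μ' (some x)) : renorm μ = renorm μ' := by
  have hs : (∑ x : X, μ (some x)) = ∑ x : X, μ' (some x) :=
    Finset.sum_congr rfl fun x _ => h x
  unfold renorm
  rw [hs]
  split
  · rfl
  · funext o; cases o <;> simp [h]

lemma renorm_div {X : Type*} [Fintype X] (μ : Option X → NNReal) {c : NNReal}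
    (hc : c ≠ 0) : renorm (fun o => μ o / c) = renorm μ := by
  have hs : (∑ x : X, μ (some x) / c) = (∑ x : X, μ (some x)) / c := by
    rw [Finset.sum_div]
  unfold renorm
  rw [hs]
  by_cases h0 : (∑ x : X, μ (some x)) = 0
  · rw [if_pos (by simp [h0]), if_pos h0]
  · rw [if_neg (by simp [h0, hc]), if_neg h0]
    funext o; cases o with
    | none => rfl
    | some x => simp only; rw [div_div_div_cancel_right₀ hc]

lemma push_eq_sum_ite {X : Type*} [Fintype X] (g : Option X → Option X)
    (ν : Option X → NNReal) (o : Option X) :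
    push g ν o = ∑ o' : Option X, if g o' = o then ν o' else 0 := by
  rw [push, Finset.sum_filter]

lemma push_comp {X : Type*} [Fintype X] (g g' : Option X → Option X)
    (ν : Option X → NNReal) : push (g' ∘ g) ν = push g' (push g ν) := by
  funext o
  simp only [push_eq_sum_ite]
  have : ∀ x : Option X, (if g' x = o then ∑ o' : Option X, if g o' = x then ν o' else 0 else 0)
      = ∑ o' : Option X, if g' x = o then (if g o' = x then ν o' else 0) else 0 := by
    intro x; split <;> simp
  simp only [this]
  rw [Finset.sum_comm]
  apply Finset.sum_congr rfl; intro o' _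
  have : ∀ x : Option X, (if g' x = o then (if g o' = x then ν o' else 0) else 0)
      = if x = g o' then (if g' x = o then ν o' else 0) else 0 := by
    intro x
    by_cases h : x = g o' <;> simp [h, eq_comm]
  simp only [this]
  rw [Finset.sum_ite_eq' Finset.univ (g o') (fun x => if g' x = o then ν o' else 0)]
  simp [Function.comp]

/-- Key stability: if `g'` fixes `∂`, renormalizing before pushing doesn't matter. -/
lemma renorm_push_renorm {X : Type*} [Fintype X] {g' : Option X → Option X}
    (hg' : g' none = none) (ν : Option X → NNReal) :
    renorm (push g' (renorm ν)) = renorm (push g' ν) := by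
  by_cases h0 : (∑ x : X, ν (some x)) = 0
  · have hν : ∀ x : X, ν (some x) = 0 := by
      intro x
      exact Finset.sum_eq_zero_iff.mp h0 x (Finset.mem_univ x)
    apply renorm_congr
    intro x
    rw [push_eq_sum_ite, push_eq_sum_ite]
    apply Finset.sum_congr rfl
    intro o' _
    cases o' with
    | none => simp [hg']
    | some y =>
      split
      · simp [renorm, h0, hν]
      · rfl
  · have key : ∀ x : X, push g' (renorm ν) (some x)
        = push g' ν (some x) / (∑ x : X, ν (some x)) := by
      intro x
      rw [push_eq_sum_ite, push_eq_sum_ite, Finset.sum_div]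
      apply Finset.sum_congr rfl
      intro o' _
      cases o' with
      | none => simp [hg']
      | some y =>
        split
        · simp [renorm, h0]
        · simp
    calc renorm (push g' (renorm ν))
        = renorm (fun o => push g' ν o / (∑ x : X, ν (some x))) :=
          renorm_congr (fun x => key x)
      _ = renorm (push g' ν) := renorm_div _ h0

/-- If each `G_k` is a set of forward mappings on `X̄ = X ∪ {∂}` and
`Φ_k = {R ∘ g⋆ : g ∈ G_k}`, then for every probability measure `b₀` supported on `X`
and every `n`, `|⋃_{k=0}^n Φ_{0:k}(b₀)| ≤ (1 + |X|)^{|supp(b₀)|}`. -/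
theorem card_union_iterSet_le {X : Type*} [Fintype X]
    (G : ℕ → Set (Option X → Option X))
    (hG : ∀ k : ℕ, ∀ g ∈ G k, ∃ (f : X → X) (S : Finset X), g = forward f S)
    (Φ : ℕ → Set ((Option X → NNReal) → (Option X → NNReal)))
    (hΦ : ∀ k : ℕ, Φ k = {ψ | ∃ g ∈ G k, ψ = fun ν => renorm (push g ν)})
    (b₀ : Option X → NNReal) (hb₀ : ∑ o : Option X, b₀ o = 1)
    (hb₀X : b₀ none = 0) (n : ℕ) :
    (⋃ k ∈ Finset.range (n + 1), iterSet Φ b₀ k).ncard ≤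
      (1 + Fintype.card X) ^ suppCard b₀ := by
  have hfix : ∀ k, ∀ g ∈ G k, g none = none := by
    intro k g hg
    obtain ⟨f, S, rfl⟩ := hG k g hg
    rfl
  -- every element of iterSet is renorm (push g b₀) for some ∂-fixing g
  have main : ∀ k, ∀ m ∈ iterSet Φ b₀ k,
      ∃ g : Option X → Option X, g none = none ∧ m = renorm (push g b₀) := by
    intro k
    induction k with
    | zero =>
      intro m hm
      obtain ⟨φ, hφ, rfl⟩ := hm
      rw [hΦ 0] at hφ
      obtain ⟨g, hg, rfl⟩ := hφ
      exact ⟨g, hfix 0 g hg, rfl⟩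
    | succ k ih =>
      intro m hm
      obtain ⟨φ, hφ, m', hm', rfl⟩ := hm
      rw [hΦ (k+1)] at hφ
      obtain ⟨g', hg', rfl⟩ := hφ
      obtain ⟨g, hgfix, rfl⟩ := ih m' hm'
      refine ⟨g' ∘ g, by simp [hfix (k+1) g' hg', hgfix], ?_⟩
      show renorm (push g' (renorm (push g b₀))) = renorm (push (g' ∘ g) b₀)
      rw [push_comp, renorm_push_renorm (hfix (k+1) g' hg')]
  -- encoder
  set F : ({x : X // b₀ (some x) ≠ 0} → Option X) → (Option X → NNReal) :=
    fun σ => renorm (push (fun o => match o with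
      | none => none
      | some x => if h : b₀ (some x) ≠ 0 then σ ⟨x, h⟩ else none) b₀) with hF
  have hsub : (⋃ k ∈ Finset.range (n + 1), iterSet Φ b₀ k) ⊆ Set.range F := by
    intro m hm
    simp only [Set.mem_iUnion] at hm
    obtain ⟨k, _, hmk⟩ := hm
    obtain ⟨g, hgfix, rfl⟩ := main k m hmk
    refine ⟨fun x => g (some x.1), ?_⟩
    show renorm (push (fun o => match o with
      | none => none
      | some x => if h : b₀ (some x) ≠ 0 then g (some x) else none) b₀)
      = renorm (push g b₀)
    have hpush : push (fun o => match o with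
      | none => none
      | some x => if h : b₀ (some x) ≠ 0 then g (some x) else none) b₀ = push g b₀ := by
      funext o
      rw [push_eq_sum_ite, push_eq_sum_ite]
      apply Finset.sum_congr rfl
      intro o' _
      by_cases hb : b₀ o' = 0
      · simp [hb]
      · cases o' with
        | none => exact absurd hb₀X hb
        | some x => simp [hb]
    rw [hpush]
  calc (⋃ k ∈ Finset.range (n + 1), iterSet Φ b₀ k).ncard
      ≤ (Set.range F).ncard :=
        Set.ncard_le_ncard hsub (Set.finite_range F)
    _ ≤ Fintype.card ({x : X // b₀ (some x) ≠ 0} → Option X) := by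
        rw [← Set.image_univ]
        calc (F '' Set.univ).ncard ≤ Set.univ.ncard := Set.ncard_image_le Set.finite_univ
          _ = _ := Set.ncard_univ _ ▸ (Nat.card_eq_fintype_card)
    _ = (1 + Fintype.card X) ^ suppCard b₀ := by
        rw [Fintype.card_fun, Fintype.card_option, Fintype.card_subtype, suppCard]
        ring_nf
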